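/- arXiv:1705.08791 — 2 statements merged into one kernel-verified Lean document; each statement's English description precedes it below -/
import Mathlib

section
/- Let S(t) = Σ_{i≥0} s_i t^i be a complex formal power series and a a nonzero complex number. A formal power series Q(t) = Σ_{i≥0} q_i t^i with q_0 = 1/a solves the ODE (t·Q''(t) + Q'(t))·Q(t) − t·(Q'(t))² = S(t)·Q(t) if and only if q_i = f_S^i(a) for all i ≥ 1. -/
/-!
Comparing coefficients of `t^n`, the ODE says
`(n+1)² q₀ q_{n+1} = s_n q₀ + Σ_{k<n} (s_k − (k+1)(2k+1−n) q_{k+1}) q_{n−k}`.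
Multiplied by `a = 1/q₀` this is exactly the recursion defining `f_S^{n+1}(a)`, and it determines
`q_{n+1}` from `q₁, …, q_n`; so the ODE holds iff the `q_i` are the values `f_S^i(a)`.
-/

open PowerSeries

open Polynomial in
/-- The sequence of polynomials `f_S^i` associated to a coefficient sequence `s`. -/
noncomputable def fseq {R : Type*} [CommRing R] [Algebra ℚ R] (s : ℕ → R) : ℕ → Polynomial R
  | 0 => 0
  | 1 => C (s 0)
  | (k+2) =>
      ((((k : ℚ)+2)^2)⁻¹) •
        (Polynomial.C (s (k+1)) + Polynomial.X *
          ∑ i ∈ (Finset.range (k+1)).attach,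
            (Polynomial.C (s i.1) - ((((i.1 : ℤ))+1) * (2*(i.1 : ℤ)+1-((k : ℤ)+1))) • fseq s (i.1+1) ) *
              fseq s (k+1-i.1))
  termination_by k => k
  decreasing_by
  all_goals (first
    | omega
    | (have h := i.2; rw [Finset.mem_range] at h; omega))

/-- A formal power series `Q` solves the ODE
`(t·Q''(t) + Q'(t))·Q(t) − t·(Q'(t))² = S(t)·Q(t)` for the data `S`. -/
def SolvesODE (S Q : PowerSeries ℂ) : Prop :=
  (X * (d⁄dX ℂ) ((d⁄dX ℂ) Q) + (d⁄dX ℂ) Q) * Q - X * ((d⁄dX ℂ) Q) ^ 2 = S * Q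

namespace PowerSeries

variable {R : Type*} [CommRing R]

theorem coeff_X_mul_derivative_derivative_add_derivative (Q : R⟦X⟧) (n : ℕ) :
    coeff n (X * d⁄dX R (d⁄dX R Q) + d⁄dX R Q) = ((n : R) + 1) ^ 2 * coeff (n + 1) Q := by
  cases n with
  | zero =>
    rw [map_add, coeff_zero_X_mul, coeff_derivative]
    push_cast
    ring
  | succ m =>
    rw [map_add, coeff_succ_X_mul, coeff_derivative, coeff_derivative]
    push_cast
    ring

theorem coeff_X_mul_derivative_sq (Q : R⟦X⟧) (n : ℕ) :
    coeff n (X * d⁄dX R Q ^ 2) =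
      ∑ k ∈ Finset.range n, ((k : R) + 1) * ((n : R) - k) * (coeff (k + 1) Q * coeff (n - k) Q) := by
  cases n with
  | zero => simp
  | succ m =>
    rw [coeff_succ_X_mul, sq, coeff_mul, Finset.Nat.sum_antidiagonal_eq_sum_range_succ_mk]
    refine Finset.sum_congr rfl fun k hk => ?_
    have hk : k ≤ m := Nat.lt_succ_iff.mp (Finset.mem_range.mp hk)
    rw [coeff_derivative, coeff_derivative, Nat.sub_add_comm hk]
    push_cast [Nat.cast_sub hk]
    ring

end PowerSeries

variable {R : Type*} [CommRing R]

/-- `(n+1)²` times the right-hand side of the recursion for `f_S^{n+1}(a)`, with `x j` in place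
of `f_S^j(a)`; only `x 1, …, x n` enter. -/
def fseqRhs (s : ℕ → R) (a : R) (x : ℕ → R) (n : ℕ) : R :=
  s n + a * ∑ k ∈ Finset.range n, (s k - ((k : R) + 1) * (2 * k + 1 - n) * x (k + 1)) * x (n - k)

theorem fseqRhs_congr {s : ℕ → R} {a : R} {x y : ℕ → R} {n : ℕ}
    (h : ∀ j, 1 ≤ j → j ≤ n → x j = y j) : fseqRhs s a x n = fseqRhs s a y n := by
  unfold fseqRhs
  congr 2
  refine Finset.sum_congr rfl fun k hk => ?_
  have hk : k < n := Finset.mem_range.mp hk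
  rw [h (k + 1) (by omega) (by omega), h (n - k) (by omega) (by omega)]

theorem eval_fseq_succ [Algebra ℚ R] (s : ℕ → R) (a : R) (n : ℕ) :
    ((n : R) + 1) ^ 2 * (fseq s (n + 1)).eval a = fseqRhs s a (fun j => (fseq s j).eval a) n := by
  cases n with
  | zero => simp [fseq, fseqRhs]
  | succ m =>
    have hscalar : ((↑(m + 1) : R) + 1) ^ 2 = algebraMap ℚ R (((m : ℚ) + 2) ^ 2) := by
      simp only [map_pow, map_add, map_natCast, map_ofNat, Nat.cast_add, Nat.cast_one]
      ring
    rw [fseq, Polynomial.eval_smul, hscalar, ← Algebra.smul_def, smul_smul,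
      mul_inv_cancel₀ (by positivity), one_smul, Finset.sum_attach (Finset.range (m + 1))
        (fun i => (Polynomial.C (s i) - ((i + 1 : ℤ) * (2 * i + 1 - (m + 1))) • fseq s (i + 1)) *
          fseq s (m + 1 - i))]
    simp only [fseqRhs, Polynomial.eval_add, Polynomial.eval_mul, Polynomial.eval_C,
      Polynomial.eval_X, Polynomial.eval_finsetSum, Polynomial.eval_sub, zsmul_eq_mul,
      Polynomial.eval_intCast]
    push_cast
    ring

theorem eq_of_forall_mul_eq_fseqRhs [IsDomain R] [CharZero R] {s : ℕ → R} {a : R} {x y : ℕ → R}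
    (hx : ∀ n : ℕ, ((n : R) + 1) ^ 2 * x (n + 1) = fseqRhs s a x n)
    (hy : ∀ n : ℕ, ((n : R) + 1) ^ 2 * y (n + 1) = fseqRhs s a y n) :
    ∀ i, 1 ≤ i → x i = y i := by
  intro i
  induction i using Nat.strong_induction_on with
  | _ i ih =>
    intro hi
    obtain ⟨n, rfl⟩ : ∃ n, i = n + 1 := ⟨i - 1, by omega⟩
    have hn : ((n : R) + 1) ^ 2 ≠ 0 := pow_ne_zero 2 (by exact_mod_cast n.succ_ne_zero)
    refine mul_left_cancel₀ hn ?_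
    rw [hx, hy]
    exact fseqRhs_congr fun j hj _ => ih j (by omega) hj

theorem PowerSeries.mul_coeff_ode_sub (S Q : R⟦X⟧) {a : R} (ha : a * coeff 0 Q = 1) (n : ℕ) :
    a * coeff n ((X * d⁄dX R (d⁄dX R Q) + d⁄dX R Q) * Q - X * d⁄dX R Q ^ 2 - S * Q) =
      ((n : R) + 1) ^ 2 * coeff (n + 1) Q - fseqRhs (coeff · S) a (coeff · Q) n := by
  have hsum : ∑ k ∈ Finset.range n,
      (coeff k S - ((k : R) + 1) * (2 * k + 1 - n) * coeff (k + 1) Q) * coeff (n - k) Q =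
        ∑ k ∈ Finset.range n, coeff k S * coeff (n - k) Q -
          ∑ k ∈ Finset.range n, ((k : R) + 1) ^ 2 * coeff (k + 1) Q * coeff (n - k) Q +
          ∑ k ∈ Finset.range n,
            ((k : R) + 1) * ((n : R) - k) * (coeff (k + 1) Q * coeff (n - k) Q) := by
    rw [← Finset.sum_sub_distrib, ← Finset.sum_add_distrib]
    exact Finset.sum_congr rfl fun k _ => by ring
  rw [map_sub, map_sub, coeff_X_mul_derivative_sq, coeff_mul, coeff_mul]
  simp only [Finset.Nat.sum_antidiagonal_eq_sum_range_succ_mk,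
    coeff_X_mul_derivative_derivative_add_derivative, Finset.sum_range_succ _ n, Nat.sub_self,
    fseqRhs, hsum]
  linear_combination (((n : R) + 1) ^ 2 * coeff (n + 1) Q - coeff n S) * ha

theorem solvesODE_iff_forall_mul_eq_fseqRhs (S Q : PowerSeries ℂ) {a : ℂ} (ha : a ≠ 0)
    (h0 : constantCoeff Q = 1 / a) :
    SolvesODE S Q ↔
      ∀ n : ℕ, ((n : ℂ) + 1) ^ 2 * coeff (n + 1) Q = fseqRhs (coeff · S) a (coeff · Q) n := by
  have hq0 : a * coeff 0 Q = 1 := by rw [coeff_zero_eq_constantCoeff_apply, h0]; field_simp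
  rw [SolvesODE, ← sub_eq_zero, PowerSeries.ext_iff]
  refine forall_congr' fun n => ?_
  rw [map_zero, ← mul_eq_zero_iff_left ha, PowerSeries.mul_coeff_ode_sub S Q hq0, sub_eq_zero]

/-- Let `S` be a complex formal power series and `a ≠ 0`.
A formal power series `Q` with `Q(0) = 1/a` solves the ODE for data `S` if and only if
its coefficients satisfy `q_i = f_S^i(a)` for all `i ≥ 1`. -/
theorem stmt4 (S : PowerSeries ℂ) (a : ℂ) (ha : a ≠ 0) (Q : PowerSeries ℂ)
    (h0 : constantCoeff Q = 1 / a) :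
    SolvesODE S Q ↔
      ∀ i : ℕ, 1 ≤ i →
        coeff i Q = (fseq (fun n => coeff n S) i).eval a := by
  rw [solvesODE_iff_forall_mul_eq_fseqRhs S Q ha h0]
  constructor
  · intro hQ
    exact eq_of_forall_mul_eq_fseqRhs hQ (eval_fseq_succ _ a)
  · intro hQ n
    rw [hQ (n + 1) n.succ_pos, fseqRhs_congr fun j hj _ => hQ j hj]
    exact eval_fseq_succ _ a n
end

section
/- Let q, S ∈ ℂ[t] and define the bivariate polynomials v(x,y) = q(xy) and σ(x,y) = S(xy). Then v·v_{xy} − v_x·v_y − σ·v = R(xy), where R(t) = t·q''(t)·q(t) + q'(t)·q(t) − t·(q'(t))² − S(t)·q(t). In particular, v solves the PDE v·v_{xy} − v_x·v_y = σ·v if and only if q solves the ODE (t·q'' + q')·q − t·(q')² = S·q. -/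
open MvPolynomial

/-
Since `v = q(xy)`, the chain rule gives `v_x = y·q'(xy)`, `v_y = x·q'(xy)` and
`v_{xy} = q'(xy) + xy·q''(xy)`, so `v·v_{xy} − v_x·v_y − σ·v` is the image of `R` under
`t ↦ xy`. This substitution is injective (setting `x = t`, `y = 1` undoes it), so the PDE
residual vanishes exactly when `R` does.
-/

/-- A bivariate polynomial `u ∈ ℂ[x,y]` solves the PDE
`u·u_{xy} − u_x·u_y = σ·u` for the data `σ`, where `x` is the variable `0` and `y` is
the variable `1`. -/
def SolvesPDE (σ u : MvPolynomial (Fin 2) ℂ) : Prop :=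
  u * pderiv 0 (pderiv 1 u) - pderiv 0 u * pderiv 1 u = σ * u

/-- A polynomial `Q` solves the ODE
`(t·Q''(t) + Q'(t))·Q(t) − t·(Q'(t))² = S(t)·Q(t)` for the data `S`. -/
def SolvesODEPoly (S Q : Polynomial ℂ) : Prop :=
  (Polynomial.X * Polynomial.derivative (Polynomial.derivative Q) + Polynomial.derivative Q) * Q
    - Polynomial.X * (Polynomial.derivative Q) ^ 2 = S * Q

/-- Substitution of the product `xy` for the variable `t` of a one-variable polynomial. -/
noncomputable def subXY (q : Polynomial ℂ) : MvPolynomial (Fin 2) ℂ :=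
  Polynomial.aeval (X 0 * X 1 : MvPolynomial (Fin 2) ℂ) q

lemma pderiv_subXY (i : Fin 2) (q : Polynomial ℂ) :
    pderiv i (subXY q) = subXY (Polynomial.derivative q) * pderiv i (X 0 * X 1) :=
  (pderiv i).map_aeval q _

lemma pderiv_zero_subXY (q : Polynomial ℂ) :
    pderiv 0 (subXY q) = subXY (Polynomial.derivative q) * X 1 := by
  simp [pderiv_subXY]

lemma pderiv_one_subXY (q : Polynomial ℂ) :
    pderiv 1 (subXY q) = subXY (Polynomial.derivative q) * X 0 := by
  simp [pderiv_subXY]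

lemma subXY_injective : Function.Injective subXY := by
  refine Function.LeftInverse.injective (g := aeval ![Polynomial.X, 1]) fun q => ?_
  simp [subXY, ← Polynomial.aeval_algHom_apply]

lemma subXY_eq_zero_iff {p : Polynomial ℂ} : subXY p = 0 ↔ p = 0 :=
  subXY_injective.eq_iff' (map_zero _)

lemma subXY_residual (q S : Polynomial ℂ) :
    subXY q * pderiv 0 (pderiv 1 (subXY q)) - pderiv 0 (subXY q) * pderiv 1 (subXY q)
        - subXY S * subXY q =
      subXY (Polynomial.X * Polynomial.derivative (Polynomial.derivative q) * q
        + Polynomial.derivative q * q - Polynomial.X * (Polynomial.derivative q) ^ 2 - S * q) := by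
  have hxy : pderiv 0 (pderiv 1 (subXY q)) =
      subXY (Polynomial.derivative q)
        + X 0 * X 1 * subXY (Polynomial.derivative (Polynomial.derivative q)) := by
    rw [pderiv_one_subXY, Derivation.leibniz, pderiv_zero_subXY, pderiv_X_self,
      smul_eq_mul, smul_eq_mul]
    ring
  rw [hxy, pderiv_zero_subXY, pderiv_one_subXY]
  simp only [subXY, map_sub, map_add, map_mul, map_pow, Polynomial.aeval_X]
  ring

/-- Let `q, S ∈ ℂ[t]`, `v(x,y) = q(xy)` and `σ(x,y) = S(xy)`. Then
`v·v_{xy} − v_x·v_y − σ·v = R(xy)` where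
`R(t) = t·q''·q + q'·q − t·(q')² − S·q`; in particular `v` solves the PDE for the data
`σ` if and only if `q` solves the ODE for the data `S`. -/
theorem stmt18 (q S : Polynomial ℂ) :
    (subXY q * pderiv 0 (pderiv 1 (subXY q)) - pderiv 0 (subXY q) * pderiv 1 (subXY q)
        - subXY S * subXY q =
      subXY (Polynomial.X * Polynomial.derivative (Polynomial.derivative q) * q
        + Polynomial.derivative q * q - Polynomial.X * (Polynomial.derivative q) ^ 2 - S * q)) ∧
    (SolvesPDE (subXY S) (subXY q) ↔ SolvesODEPoly S q) := by
  refine ⟨subXY_residual q S, ?_⟩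
  rw [SolvesPDE, SolvesODEPoly, ← sub_eq_zero, subXY_residual, subXY_eq_zero_iff,
    ← sub_eq_zero (b := S * q), add_mul]
end
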